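/- arXiv:2011.00288 — 2 statements merged into one kernel-verified Lean document; each statement's English description precedes it below -/
import Mathlib

section
/- Let x, x_* ∈ ℝ^n be nonzero with ‖x − x_*‖ ≤ ε‖x_*‖ for some 0 < ε ≤ 0.001. Then the angle θ := θ_{x,x_*} between x and x_* satisfies |θ| ≤ 2ε, and consequently ‖Φ_{x,x_*} − I_n‖ ≤ (2|θ|/π) + (2|sin θ|/π) ≤ 8ε/π. -/
noncomputable section
open Matrix MeasureTheory ProbabilityTheory Real

/-- Euclidean norm on `Fin n → ℝ`. -/
def eucNorm {n : ℕ} (x : Fin n → ℝ) : ℝ := Real.sqrt (∑ i, x i ^ 2)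

/-- Euclidean inner product. -/
def dotp {n : ℕ} (x y : Fin n → ℝ) : ℝ := ∑ i, x i * y i

/-- Angle between two vectors. -/
def angle' {n : ℕ} (x y : Fin n → ℝ) : ℝ :=
  Real.arccos (dotp x y / (eucNorm x * eucNorm y))

/-- Normalization `x̂ = x / ‖x‖`. -/
def unitize {n : ℕ} (x : Fin n → ℝ) : Fin n → ℝ := (eucNorm x)⁻¹ • x

/-- The symmetric matrix `M_{x̂↔ŷ}` sending `x̂ ↦ ŷ`, `ŷ ↦ x̂`, and `z ↦ 0`
for `z ⊥ span{x,y}`. -/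
def Mswap {n : ℕ} (x y : Fin n → ℝ) : Matrix (Fin n) (Fin n) ℝ :=
  let u := unitize x
  let v := unitize y
  let c := dotp u v
  if c ^ 2 = 1 then Matrix.vecMulVec u v
  else (1 / (1 - c ^ 2)) • (Matrix.vecMulVec u v + Matrix.vecMulVec v u)
       - (c / (1 - c ^ 2)) • (Matrix.vecMulVec u u + Matrix.vecMulVec v v)

/-- Operator (spectral) norm of a matrix, w.r.t. Euclidean norms. -/
def opNorm {m n : ℕ} (M : Matrix (Fin m) (Fin n) ℝ) : ℝ :=
  ‖(LinearMap.toContinuousLinearMap (Matrix.toEuclideanLin M))‖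

/-- `A_x = diag(sgn(Ax)) A` where `sgn` is applied entrywise. -/
def Asgn {m n : ℕ} (A : Matrix (Fin m) (Fin n) ℝ) (x : Fin n → ℝ) :
    Matrix (Fin m) (Fin n) ℝ :=
  Matrix.diagonal (fun i => Real.sign (A.mulVec x i)) * A

/-- `Φ_{x,y}`. -/
def Phi {n : ℕ} (x y : Fin n → ℝ) : Matrix (Fin n) (Fin n) ℝ :=
  if x ≠ 0 ∧ y ≠ 0 then
    ((π - 2 * angle' x y) / π) • (1 : Matrix (Fin n) (Fin n) ℝ)
      + (2 * Real.sin (angle' x y) / π) • Mswap x y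
  else 0

/-- The Measurement Distribution Condition with constant `ε`. -/
def MDC {m n : ℕ} (A : Matrix (Fin m) (Fin n) ℝ) (ε : ℝ) : Prop :=
  ∀ x y : Fin n → ℝ, opNorm ((Asgn A x)ᵀ * Asgn A y - Phi x y) ≤ ε

/-- `dist(x, x_*) = min(‖x - x_*‖, ‖x + x_*‖)`. -/
def pdist {n : ℕ} (x y : Fin n → ℝ) : ℝ := min (eucNorm (x - y)) (eucNorm (x + y))


section AuxLemmas
variable {n : ℕ}

private lemma enorm_eq' (x : Fin n → ℝ) : eucNorm x = ‖(WithLp.equiv 2 (Fin n → ℝ)).symm x‖ := by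
  rw [EuclideanSpace.norm_eq]
  simp [eucNorm, sq_abs]

private lemma dotp_eq' (x y : Fin n → ℝ) :
    dotp x y = inner ℝ ((WithLp.equiv 2 (Fin n → ℝ)).symm x) ((WithLp.equiv 2 (Fin n → ℝ)).symm y) := by
  simp [dotp, PiLp.inner_apply, RCLike.inner_apply, mul_comm]

private lemma enorm_nonneg' (x : Fin n → ℝ) : 0 ≤ eucNorm x := Real.sqrt_nonneg _

private lemma eucNorm_pos' {x : Fin n → ℝ} (hx : x ≠ 0) : 0 < eucNorm x := by
  rw [enorm_eq', norm_pos_iff]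
  intro h
  apply hx
  have := congrArg (WithLp.equiv 2 (Fin n → ℝ)) h
  simpa using this

private lemma enorm_add_le' (x y : Fin n → ℝ) : eucNorm (x + y) ≤ eucNorm x + eucNorm y := by
  rw [enorm_eq', enorm_eq', enorm_eq', WithLp.equiv_symm_apply, WithLp.toLp_add]
  exact norm_add_le _ _

private lemma enorm_smul' (t : ℝ) (x : Fin n → ℝ) : eucNorm (t • x) = |t| * eucNorm x := by
  rw [enorm_eq', enorm_eq', WithLp.equiv_symm_apply, WithLp.toLp_smul, norm_smul, Real.norm_eq_abs]

private lemma abs_dotp_le' (x y : Fin n → ℝ) : |dotp x y| ≤ eucNorm x * eucNorm y := by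
  rw [dotp_eq', enorm_eq', enorm_eq']
  exact abs_real_inner_le_norm _ _

private lemma dotp_self' (x : Fin n → ℝ) : dotp x x = eucNorm x ^ 2 := by
  rw [eucNorm, Real.sq_sqrt (by positivity)]
  simp [dotp, sq]

private lemma enorm_sub_le' (x y : Fin n → ℝ) : eucNorm (x - y) ≤ eucNorm x + eucNorm y := by
  rw [enorm_eq', enorm_eq', enorm_eq', WithLp.equiv_symm_apply, WithLp.toLp_sub]
  exact norm_sub_le _ _

private lemma dotp_comm' (x y : Fin n → ℝ) : dotp x y = dotp y x := by
  simp [dotp, mul_comm]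

private lemma dotp_add_left' (x y z : Fin n → ℝ) : dotp (x + y) z = dotp x z + dotp y z := by
  simp [dotp, add_mul, Finset.sum_add_distrib]

private lemma dotp_sub_left' (x y z : Fin n → ℝ) : dotp (x - y) z = dotp x z - dotp y z := by
  simp [dotp, sub_mul, Finset.sum_sub_distrib]

private lemma dotp_smul_left' (t : ℝ) (x y : Fin n → ℝ) : dotp (t • x) y = t * dotp x y := by
  simp [dotp, Finset.mul_sum, mul_assoc]

private lemma dotp_add_right' (x y z : Fin n → ℝ) : dotp x (y + z) = dotp x y + dotp x z := by
  rw [dotp_comm', dotp_add_left', dotp_comm' y x, dotp_comm' z x]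

private lemma dotp_sub_right' (x y z : Fin n → ℝ) : dotp x (y - z) = dotp x y - dotp x z := by
  rw [dotp_comm', dotp_sub_left', dotp_comm' y x, dotp_comm' z x]

private lemma dotp_smul_right' (t : ℝ) (x y : Fin n → ℝ) : dotp x (t • y) = t * dotp x y := by
  rw [dotp_comm', dotp_smul_left', dotp_comm' y x]

private lemma vecMulVec_mulVec' (u v z : Fin n → ℝ) :
    (Matrix.vecMulVec u v) *ᵥ z = dotp v z • u := by
  funext i
  simp [Matrix.vecMulVec, Matrix.mulVec, dotProduct, dotp, Finset.sum_mul, Pi.smul_apply,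
    smul_eq_mul, Finset.mul_sum]
  ring_nf

private lemma dotp_unitize_self' {x : Fin n → ℝ} (hx : x ≠ 0) :
    dotp (unitize x) (unitize x) = 1 := by
  have h := eucNorm_pos' hx
  rw [unitize, dotp_smul_left', dotp_smul_right', dotp_self']
  field_simp

private lemma enorm_le_of_sq_le {w z : Fin n → ℝ} (h : eucNorm w ^ 2 ≤ eucNorm z ^ 2) :
    eucNorm w ≤ eucNorm z := by
  nlinarith [enorm_nonneg' w, enorm_nonneg' z]

private lemma enorm_unitize' {x : Fin n → ℝ} (hx : x ≠ 0) : eucNorm (unitize x) = 1 := by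
  have h := eucNorm_pos' hx
  rw [unitize, enorm_smul', abs_of_nonneg (by positivity)]
  field_simp

private lemma Mswap_mulVec_le {x y : Fin n → ℝ} (hx : x ≠ 0) (hy : y ≠ 0) (z : Fin n → ℝ) :
    eucNorm ((Mswap x y) *ᵥ z) ≤ eucNorm z := by
  set u := unitize x with hu
  set v := unitize y with hv
  have huu : dotp u u = 1 := dotp_unitize_self' hx
  have hvv : dotp v v = 1 := dotp_unitize_self' hy
  set c := dotp u v with hc
  have hvu : dotp v u = c := dotp_comm' v u
  set p := dotp u z with hp
  set q := dotp v z with hq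
  have hzu : dotp z u = p := dotp_comm' z u
  have hzv : dotp z v = q := dotp_comm' z v
  rw [Mswap]
  by_cases h1 : c ^ 2 = 1
  · rw [if_pos h1]
    rw [vecMulVec_mulVec', enorm_smul', enorm_unitize' hx, mul_one]
    calc |dotp v z| ≤ eucNorm v * eucNorm z := abs_dotp_le' v z
      _ = eucNorm z := by rw [enorm_unitize' hy, one_mul]
  · rw [if_neg h1]
    set r := 1 - c ^ 2 with hr
    have hr0 : r ≠ 0 := by
      intro h; apply h1; rw [hr] at h; linarith [h]
    set a := (q - c * p) / r with ha
    set b := (p - c * q) / r with hb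
    have hM : ((1 / r) • (Matrix.vecMulVec u v + Matrix.vecMulVec v u)
        - (c / r) • (Matrix.vecMulVec u u + Matrix.vecMulVec v v)) *ᵥ z = a • u + b • v := by
      rw [Matrix.sub_mulVec, Matrix.smul_mulVec, Matrix.smul_mulVec,
        Matrix.add_mulVec, Matrix.add_mulVec, vecMulVec_mulVec', vecMulVec_mulVec',
        vecMulVec_mulVec', vecMulVec_mulVec']
      funext i
      simp only [Pi.add_apply, Pi.sub_apply, Pi.smul_apply, smul_eq_mul, ha, hb, ← hp, ← hq]
      field_simp
      ring
    rw [hM]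
    apply enorm_le_of_sq_le
    rw [← dotp_self', ← dotp_self']
    have hlhs : dotp (a • u + b • v) (a • u + b • v) = a^2 + b^2 + 2*a*b*c := by
      simp only [dotp_add_left', dotp_add_right', dotp_smul_left', dotp_smul_right',
        huu, hvv, ← hc, hvu]
      ring
    rw [hlhs]
    set w : Fin n → ℝ := z - b • u - a • v with hw
    have hww : dotp w w = dotp z z - 2*b*p - 2*a*q + b^2 + a^2 + 2*a*b*c := by
      simp only [hw, dotp_sub_left', dotp_sub_right', dotp_smul_left', dotp_smul_right',
        huu, hvv, ← hc, hvu, hzu, hzv, ← hp, ← hq]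
      ring
    have hww0 : 0 ≤ dotp w w := by rw [dotp_self']; positivity
    have heq : a^2 + b^2 + 2*a*b*c = b*p + a*q := by
      rw [ha, hb]
      field_simp
      rw [hr]
      ring
    nlinarith [hww0, hww, heq]

private lemma opNorm_le_of_enorm {M : Matrix (Fin n) (Fin n) ℝ} {B : ℝ} (hB : 0 ≤ B)
    (h : ∀ z : Fin n → ℝ, eucNorm (M *ᵥ z) ≤ B * eucNorm z) : opNorm M ≤ B := by
  apply ContinuousLinearMap.opNorm_le_bound _ hB
  intro z
  simp only [LinearMap.coe_toContinuousLinearMap']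
  have hz : z = (WithLp.equiv 2 (Fin n → ℝ)).symm (WithLp.equiv 2 (Fin n → ℝ) z) := rfl
  rw [hz, WithLp.equiv_symm_apply, Matrix.toEuclideanLin_apply_piLp_toLp, ← WithLp.equiv_symm_apply, ← enorm_eq', ← enorm_eq']
  exact h _

private lemma arccos_antitone' {s t : ℝ} (h : s ≤ t) : Real.arccos t ≤ Real.arccos s := by
  rw [Real.arccos_eq_pi_div_two_sub_arcsin, Real.arccos_eq_pi_div_two_sub_arcsin]
  have := Real.monotone_arcsin h
  linarith

private lemma angle_le' {ε : ℝ} (hε0 : 0 < ε) (hε1 : ε ≤ 0.001)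
    (x xstar : Fin n → ℝ) (hx : x ≠ 0) (hxs : xstar ≠ 0)
    (hclose : eucNorm (x - xstar) ≤ ε * eucNorm xstar) :
    angle' x xstar ≤ 2 * ε := by
  set a := eucNorm x with hA
  set b := eucNorm xstar with hB
  set d := eucNorm (x - xstar) with hD
  have ha : 0 < a := eucNorm_pos' hx
  have hb : 0 < b := eucNorm_pos' hxs
  have hd0 : 0 ≤ d := enorm_nonneg' _
  have hπ := Real.pi_pos
  have hπ1 : π < 3.15 := Real.pi_lt_d2
  have hπ2 : 3.14 < π := Real.pi_gt_d2
  have hsq : d ^ 2 = a ^ 2 + b ^ 2 - 2 * dotp x xstar := by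
    rw [hD, ← dotp_self', dotp_sub_left', dotp_sub_right', dotp_sub_right',
      dotp_self', dotp_self', dotp_comm' xstar x]
    ring
  have htri : b ≤ a + d := by
    have h1 : xstar = x - (x - xstar) := by abel
    calc b = eucNorm (x - (x - xstar)) := by rw [← h1]
      _ ≤ a + d := enorm_sub_le' _ _
  have hd2 : d ^ 2 ≤ ε ^ 2 * b ^ 2 := by nlinarith
  have hba : (1 - ε) * b ≤ a := by nlinarith
  have h2e : |2 * ε| ≤ π := by rw [abs_of_nonneg (by linarith)]; linarith
  have hcos8 : Real.cos (2 * ε) ≤ 1 - 8 / π ^ 2 * ε ^ 2 := by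
    have := Real.cos_le_one_sub_mul_cos_sq h2e
    calc Real.cos (2*ε) ≤ 1 - 2 / π^2 * (2*ε)^2 := this
      _ = 1 - 8 / π^2 * ε^2 := by ring
  have hcos : Real.cos (2 * ε) ≤ 1 - 0.8 * ε ^ 2 := by
    have h8 : (0.8 : ℝ) ≤ 8 / π ^ 2 := by
      rw [le_div_iff₀ (by positivity)]; nlinarith
    nlinarith [sq_nonneg ε]
  have hkey : Real.cos (2 * ε) ≤ dotp x xstar / (a * b) := by
    rw [le_div_iff₀ (by positivity)]
    have hab : (1 - ε) * b ^ 2 ≤ a * b := by nlinarith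
    nlinarith [sq_nonneg (a - b), mul_pos ha hb,
      mul_le_mul_of_nonneg_right hcos (mul_pos ha hb).le,
      mul_le_mul_of_nonneg_left hab (sq_nonneg ε)]
  have h := arccos_antitone' hkey
  rw [Real.arccos_cos (by linarith) (by linarith)] at h
  exact h

end AuxLemmas

/-- If `x, x_*` are nonzero and `‖x − x_*‖ ≤ ε‖x_*‖` with `0 < ε ≤ 0.001`, then
the angle `θ = θ_{x,x_*}` satisfies `|θ| ≤ 2ε` and
`‖Φ_{x,x_*} − Iₙ‖ ≤ 2|θ|/π + 2|sin θ|/π ≤ 8ε/π`. -/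
theorem angle_and_Phi_close_to_identity {n : ℕ}
    (ε : ℝ) (hε0 : 0 < ε) (hε1 : ε ≤ 0.001)
    (x xstar : Fin n → ℝ) (hx : x ≠ 0) (hxs : xstar ≠ 0)
    (hclose : eucNorm (x - xstar) ≤ ε * eucNorm xstar) :
    |angle' x xstar| ≤ 2 * ε ∧
    opNorm (Phi x xstar - 1) ≤
      2 * |angle' x xstar| / π + 2 * |Real.sin (angle' x xstar)| / π ∧
    2 * |angle' x xstar| / π + 2 * |Real.sin (angle' x xstar)| / π ≤ 8 * ε / π := by
  have hπ := Real.pi_pos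
  set θ := angle' x xstar with hθdef
  have hθ0 : 0 ≤ θ := Real.arccos_nonneg _
  have habs : |θ| = θ := abs_of_nonneg hθ0
  have h1 : θ ≤ 2 * ε := angle_le' hε0 hε1 x xstar hx hxs hclose
  have habs1 : |θ| ≤ 2 * ε := by rw [habs]; exact h1
  have hsin : |Real.sin θ| ≤ 2 * ε := by
    calc |Real.sin θ| ≤ |θ| := Real.abs_sin_le_abs
      _ ≤ 2 * ε := habs1
  refine ⟨habs1, ?_, ?_⟩
  · -- opNorm bound
    have hφ : Phi x xstar - 1 = (-(2 * θ) / π) • (1 : Matrix (Fin n) (Fin n) ℝ)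
        + (2 * Real.sin θ / π) • Mswap x xstar := by
      rw [Phi, if_pos ⟨hx, hxs⟩, ← hθdef]
      have hc : (π - 2 * θ) / π = 1 + -(2 * θ) / π := by
        field_simp
        ring
      rw [hc]
      module
    rw [hφ]
    set B := 2 * |θ| / π + 2 * |Real.sin θ| / π with hBdef
    have hB : 0 ≤ B := by positivity
    apply opNorm_le_of_enorm hB
    intro z
    have hmv : ((-(2 * θ) / π) • (1 : Matrix (Fin n) (Fin n) ℝ)
        + (2 * Real.sin θ / π) • Mswap x xstar) *ᵥ z
        = (-(2 * θ) / π) • z + (2 * Real.sin θ / π) • (Mswap x xstar *ᵥ z) := by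
      rw [Matrix.add_mulVec, Matrix.smul_mulVec, Matrix.smul_mulVec,
        Matrix.one_mulVec]
    rw [hmv]
    calc eucNorm ((-(2 * θ) / π) • z + (2 * Real.sin θ / π) • (Mswap x xstar *ᵥ z))
        ≤ eucNorm ((-(2 * θ) / π) • z) + eucNorm ((2 * Real.sin θ / π) • (Mswap x xstar *ᵥ z)) :=
          enorm_add_le' _ _
      _ = |(-(2 * θ) / π)| * eucNorm z + |(2 * Real.sin θ / π)| * eucNorm (Mswap x xstar *ᵥ z) := by
          rw [enorm_smul', enorm_smul']
      _ ≤ |(-(2 * θ) / π)| * eucNorm z + |(2 * Real.sin θ / π)| * eucNorm z := by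
          gcongr
          exact Mswap_mulVec_le hx hxs z
      _ = B * eucNorm z := by
          rw [hBdef]
          rw [abs_div, abs_div, abs_of_pos hπ, abs_neg, abs_mul, abs_mul]
          rw [abs_of_nonneg (by norm_num : (0:ℝ) ≤ 2)]
          ring
  · -- final bound
    rw [← add_div, div_le_div_iff₀ (by positivity) hπ]
    nlinarith [habs1, hsin]
end
end

section
/- Fix ε > 0 and u ∈ S^{n−1}. For a matrix V ∈ ℝ^{m×n} with rows v_1,…,v_m, define B_{V,ε²,u} := {z ∈ ℝ^n : Σ_{i=1}^m |⟨v_i,z⟩|·⟨v_i,u⟩² ≤ ε²·m} and g_V(x,y) := (1/m)·⟨u, G_{V,up}(x,y)·u⟩. Then for any V ∈ ℝ^{m×n} and any x, x̃, y, ỹ ∈ ℝ^n with x − x̃ ∈ B_{V,ε²,u} and y − ỹ ∈ B_{V,ε²,u}, we have |g_V(x,y) − g_V(x̃,ỹ)| ≤ 2ε. -/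
noncomputable section
open Matrix MeasureTheory ProbabilityTheory Real

/-- `A_{+,x} = diag(1_{Ax>0}) A`. -/
def Aplus {m n : ℕ} (A : Matrix (Fin m) (Fin n) ℝ) (x : Fin n → ℝ) :
    Matrix (Fin m) (Fin n) ℝ :=
  Matrix.diagonal (fun i => if 0 < A.mulVec x i then (1 : ℝ) else 0) * A

/-- `A_{−,x} = diag(1_{Ax<0}) A`. -/
def Aminus {m n : ℕ} (A : Matrix (Fin m) (Fin n) ℝ) (x : Fin n → ℝ) :
    Matrix (Fin m) (Fin n) ℝ :=
  Matrix.diagonal (fun i => if A.mulVec x i < 0 then (1 : ℝ) else 0) * A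

/-- `φ⁺_{−ε}` : continuous upper relaxation of `1_{t>0}`. -/
def phiPlusLo (ε t : ℝ) : ℝ := if t ≤ -ε then 0 else if t ≤ 0 then 1 + t / ε else 1

/-- `φ⁺_{ε}` : continuous lower relaxation of `1_{t>0}`. -/
def phiPlusHi (ε t : ℝ) : ℝ := if t < 0 then 0 else if t < ε then t / ε else 1

/-- `φ⁻_{−ε}` : continuous lower relaxation of `1_{t<0}`. -/
def phiMinusLo (ε t : ℝ) : ℝ := if t ≤ -ε then 1 else if t ≤ 0 then -t / ε else 0

/-- `φ⁻_{ε}` : continuous upper relaxation of `1_{t<0}`. -/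
def phiMinusHi (ε t : ℝ) : ℝ := if t < 0 then 1 else if t < ε then 1 - t / ε else 0

/-- `G_{V,up}(x,y) = Σᵢ φ⁺_{−ε}(⟨vᵢ,x⟩) φ⁻_{ε}(⟨vᵢ,y⟩) vᵢvᵢᵀ`. -/
def Gup {m n : ℕ} (ε : ℝ) (V : Matrix (Fin m) (Fin n) ℝ) (x y : Fin n → ℝ) :
    Matrix (Fin n) (Fin n) ℝ :=
  ∑ i, (phiPlusLo ε (dotp (V i) x) * phiMinusHi ε (dotp (V i) y)) •
    Matrix.vecMulVec (V i) (V i)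

/-- `G_{V,low}(x,y) = Σᵢ φ⁺_{ε}(⟨vᵢ,x⟩) φ⁻_{−ε}(⟨vᵢ,y⟩) vᵢvᵢᵀ`. -/
def Glow {m n : ℕ} (ε : ℝ) (V : Matrix (Fin m) (Fin n) ℝ) (x y : Fin n → ℝ) :
    Matrix (Fin n) (Fin n) ℝ :=
  ∑ i, (phiPlusHi ε (dotp (V i) x) * phiMinusLo ε (dotp (V i) y)) •
    Matrix.vecMulVec (V i) (V i)


lemma gV_aux_quad {m n : ℕ} (c : Fin m → ℝ) (V : Matrix (Fin m) (Fin n) ℝ) (u : Fin n → ℝ) :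
    dotp u ((∑ i, c i • Matrix.vecMulVec (V i) (V i)).mulVec u)
      = ∑ i, c i * (dotp (V i) u) ^ 2 := by
  simp only [dotp, Matrix.mulVec, Matrix.vecMulVec_apply, dotProduct,
    Matrix.sum_apply, Matrix.smul_apply, smul_eq_mul,
    Finset.mul_sum, Finset.sum_mul]
  refine Eq.symm ?_
  calc ∑ i, c i * (∑ j, V i j * u j) ^ 2
      = ∑ i, ∑ j, ∑ k, u j * (c i * (V i j * V i k) * u k) := by
        refine Finset.sum_congr rfl fun i _ => ?_
        rw [sq, Finset.sum_mul_sum, Finset.mul_sum]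
        refine Finset.sum_congr rfl fun j _ => ?_
        rw [Finset.mul_sum]
        refine Finset.sum_congr rfl fun k _ => ?_
        ring
    _ = ∑ j, ∑ k, ∑ i, u j * (c i * (V i j * V i k) * u k) := by
        rw [Finset.sum_comm]
        exact Finset.sum_congr rfl fun j _ => Finset.sum_comm

lemma gV_aux_abs_mul_le_of (X ε C : ℝ) (hε : 0 < ε) (h1 : -C ≤ X * ε) (h2 : X * ε ≤ C) :
    |X| * ε ≤ C := by
  calc |X| * ε = |X * ε| := by rw [abs_mul, abs_of_pos hε]
  _ ≤ C := abs_le.mpr ⟨h1, h2⟩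

lemma gV_aux_phiPlusLo_mem (ε t : ℝ) (hε : 0 < ε) : phiPlusLo ε t ∈ Set.Icc (0:ℝ) 1 := by
  unfold phiPlusLo
  split_ifs with h1 h2
  · norm_num
  · constructor
    · have : (-1:ℝ) ≤ t / ε := (le_div_iff₀ hε).mpr (by linarith)
      linarith
    · have : t / ε ≤ 0 := (div_le_iff₀ hε).mpr (by linarith)
      linarith
  · norm_num

lemma gV_aux_phiMinusHi_mem (ε t : ℝ) (hε : 0 < ε) : phiMinusHi ε t ∈ Set.Icc (0:ℝ) 1 := by
  unfold phiMinusHi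
  split_ifs with h1 h2
  · norm_num
  · constructor
    · have : t / ε ≤ 1 := (div_le_iff₀ hε).mpr (by linarith)
      linarith
    · have : (0:ℝ) ≤ t / ε := div_nonneg (by linarith) hε.le
      linarith
  · norm_num

lemma gV_aux_phiPlusLo_lip (ε a b : ℝ) (hε : 0 < ε) :
    |phiPlusLo ε a - phiPlusLo ε b| * ε ≤ |a - b| := by
  unfold phiPlusLo
  have hne := hε.ne'
  split_ifs with h1 h2 h3 h4 h5 h6 h7 h8 h9
  all_goals apply gV_aux_abs_mul_le_of _ _ _ hε
  all_goals try push_neg at *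
  all_goals nlinarith [le_abs_self (a-b), neg_abs_le (a-b), abs_nonneg (a-b),
    div_mul_cancel₀ a hne, div_mul_cancel₀ b hne]

lemma gV_aux_phiMinusHi_lip (ε a b : ℝ) (hε : 0 < ε) :
    |phiMinusHi ε a - phiMinusHi ε b| * ε ≤ |a - b| := by
  unfold phiMinusHi
  have hne := hε.ne'
  split_ifs with h1 h2 h3 h4 h5 h6 h7 h8 h9
  all_goals apply gV_aux_abs_mul_le_of _ _ _ hε
  all_goals try push_neg at *
  all_goals nlinarith [le_abs_self (a-b), neg_abs_le (a-b), abs_nonneg (a-b),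
    div_mul_cancel₀ a hne, div_mul_cancel₀ b hne]

lemma gV_aux_prod_diff (p p' q q' : ℝ)
    (hp : p ∈ Set.Icc (0:ℝ) 1) (hp' : p' ∈ Set.Icc (0:ℝ) 1)
    (hq : q ∈ Set.Icc (0:ℝ) 1) (hq' : q' ∈ Set.Icc (0:ℝ) 1) :
    |p * q - p' * q'| ≤ |p - p'| + |q - q'| := by
  obtain ⟨hp0, hp1⟩ := hp; obtain ⟨hp0', hp1'⟩ := hp'
  obtain ⟨hq0, hq1⟩ := hq; obtain ⟨hq0', hq1'⟩ := hq'
  calc |p * q - p' * q'| = |p * (q - q') + (p - p') * q'| := by ring_nf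
  _ ≤ |p * (q - q')| + |(p - p') * q'| := abs_add_le _ _
  _ = |p| * |q - q'| + |p - p'| * |q'| := by rw [abs_mul, abs_mul]
  _ ≤ |p - p'| + |q - q'| := by
      have e1 : |p| ≤ 1 := abs_le.mpr ⟨by linarith, hp1⟩
      have e2 : |q'| ≤ 1 := abs_le.mpr ⟨by linarith, hq1'⟩
      nlinarith [abs_nonneg (q - q'), abs_nonneg (p - p'), abs_nonneg p, abs_nonneg q']

lemma gV_aux_dotp_sub {n : ℕ} (v x y : Fin n → ℝ) :
    dotp v (x - y) = dotp v x - dotp v y := by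
  simp [dotp, mul_sub, Finset.sum_sub_distrib]

/-- Pseudo-Lipschitzness of `g_V(x,y) = (1/m)⟨u, G_{V,up}(x,y) u⟩` with respect to the
sets `B_{V,ε²,u} = {z : Σᵢ |⟨vᵢ,z⟩| ⟨vᵢ,u⟩² ≤ ε² m}`. -/
theorem gV_pseudoLipschitz {m n : ℕ} (ε : ℝ) (hε : 0 < ε)
    (u : Fin n → ℝ) (hu : eucNorm u = 1)
    (V : Matrix (Fin m) (Fin n) ℝ)
    (x xt y yt : Fin n → ℝ)
    (hx : ∑ i, |dotp (V i) (x - xt)| * dotp (V i) u ^ 2 ≤ ε ^ 2 * m)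
    (hy : ∑ i, |dotp (V i) (y - yt)| * dotp (V i) u ^ 2 ≤ ε ^ 2 * m) :
    |(1 / (m : ℝ)) * dotp u ((Gup ε V x y).mulVec u)
      - (1 / (m : ℝ)) * dotp u ((Gup ε V xt yt).mulVec u)| ≤ 2 * ε := by
  classical
  set d : Fin m → ℝ := fun i => dotp (V i) u with hd
  set c : Fin m → ℝ :=
    fun i => phiPlusLo ε (dotp (V i) x) * phiMinusHi ε (dotp (V i) y) with hc
  set c' : Fin m → ℝ :=
    fun i => phiPlusLo ε (dotp (V i) xt) * phiMinusHi ε (dotp (V i) yt) with hc'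
  have hS : dotp u ((Gup ε V x y).mulVec u) = ∑ i, c i * d i ^ 2 := by
    rw [Gup]; exact gV_aux_quad c V u
  have hS' : dotp u ((Gup ε V xt yt).mulVec u) = ∑ i, c' i * d i ^ 2 := by
    rw [Gup]; exact gV_aux_quad c' V u
  rw [hS, hS']
  have key : ∀ i, |c i - c' i| * ε ≤
      |dotp (V i) (x - xt)| + |dotp (V i) (y - yt)| := by
    intro i
    have h1 : |c i - c' i| ≤
        |phiPlusLo ε (dotp (V i) x) - phiPlusLo ε (dotp (V i) xt)|
          + |phiMinusHi ε (dotp (V i) y) - phiMinusHi ε (dotp (V i) yt)| :=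
      gV_aux_prod_diff _ _ _ _ (gV_aux_phiPlusLo_mem _ _ hε)
        (gV_aux_phiPlusLo_mem _ _ hε) (gV_aux_phiMinusHi_mem _ _ hε)
        (gV_aux_phiMinusHi_mem _ _ hε)
    have h2 := gV_aux_phiPlusLo_lip ε (dotp (V i) x) (dotp (V i) xt) hε
    have h3 := gV_aux_phiMinusHi_lip ε (dotp (V i) y) (dotp (V i) yt) hε
    rw [gV_aux_dotp_sub, gV_aux_dotp_sub]
    nlinarith [abs_nonneg (c i - c' i), hε]
  have hsum : |∑ i, c i * d i ^ 2 - ∑ i, c' i * d i ^ 2| * ε ≤ 2 * ε ^ 2 * m := by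
    rw [← Finset.sum_sub_distrib]
    calc |∑ i, (c i * d i ^ 2 - c' i * d i ^ 2)| * ε
        ≤ (∑ i, |c i * d i ^ 2 - c' i * d i ^ 2|) * ε :=
          mul_le_mul_of_nonneg_right (Finset.abs_sum_le_sum_abs _ _) hε.le
      _ = ∑ i, |c i - c' i| * ε * d i ^ 2 := by
          rw [Finset.sum_mul]
          refine Finset.sum_congr rfl fun i _ => ?_
          rw [show c i * d i ^ 2 - c' i * d i ^ 2 = (c i - c' i) * d i ^ 2 by ring,
            abs_mul, abs_of_nonneg (sq_nonneg (d i))]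
          ring
      _ ≤ ∑ i, (|dotp (V i) (x - xt)| + |dotp (V i) (y - yt)|) * d i ^ 2 := by
          apply Finset.sum_le_sum
          intro i _
          exact mul_le_mul_of_nonneg_right (key i) (sq_nonneg _)
      _ = (∑ i, |dotp (V i) (x - xt)| * d i ^ 2)
            + ∑ i, |dotp (V i) (y - yt)| * d i ^ 2 := by
          rw [← Finset.sum_add_distrib]
          exact Finset.sum_congr rfl fun i _ => by ring
      _ ≤ ε ^ 2 * m + ε ^ 2 * m := add_le_add hx hy
      _ = 2 * ε ^ 2 * m := by ring
  rw [← mul_sub, abs_mul]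
  rcases Nat.eq_zero_or_pos m with hm | hm
  · subst hm
    simp only [Nat.cast_zero, div_zero, one_div, _root_.inv_zero, abs_zero, zero_mul]
    positivity
  · have hm' : (0:ℝ) < m := by exact_mod_cast hm
    have habs : |∑ i, c i * d i ^ 2 - ∑ i, c' i * d i ^ 2| ≤ 2 * ε * m := by
      nlinarith [hsum, hε]
    rw [abs_of_nonneg (by positivity : (0:ℝ) ≤ 1 / (m:ℝ))]
    calc (1 / (m:ℝ)) * |∑ i, c i * d i ^ 2 - ∑ i, c' i * d i ^ 2|
        ≤ (1 / (m:ℝ)) * (2 * ε * m) :=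
          mul_le_mul_of_nonneg_left habs (by positivity)
      _ = 2 * ε := by field_simp
end
end
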